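/- arXiv:2405.16212 — 2 statements merged into one kernel-verified Lean document; each statement's English description precedes it below -/
import Mathlib

section
/- Let X be a pre-Hilbert module over a C*-algebra A and φ a positive linear functional on A. If n ≥ 2 and x₁,…,xₙ, z ∈ X satisfy φ(|z|²)=1, then for every real ζ ≥ 0 and every nonzero complex number α: |∏_{i=1}^{n} φ(⟨x_i,z⟩)|² ≤ (max{1,|α−1|²}/|α|²)·∏_{i=1}^{n} φ(|x_i|²) + (1/(|α|²(1+ζ)))·|φ(⟨x₁,x₂⟩)·∏_{i=3}^{n} φ(⟨x_i,z⟩)|² + ((ζ + 2(1+ζ)·max{1,|α−1|})/(|α|²(1+ζ)))·∏_{i=1}^{n} √(φ(|x_i|²))·|φ(⟨x₁,x₂⟩)·∏_{i=3}^{n} φ(⟨x_i,z⟩)|. -/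
/-!
The positive functional turns the `A`-valued inner product into a scalar semi-inner product
`φ ⟪x, y⟫_A`, so the statement is one about a semi-inner product space with a unit vector `e = z`.
There, with `u = x₂ - (α ⟪e, x₂⟫) • e`, one has `⟪x₁, x₂⟫ - α ⟪x₁, e⟫ ⟪e, x₂⟫ = ⟪x₁, u⟫` and
`‖u‖² = ‖x₂‖² + (|α - 1|² - 1) |⟪e, x₂⟫|² ≤ max(1, |α - 1|)² ‖x₂‖²`, which by Cauchy–Schwarz gives
the Buzano-type bound `|⟪x₁, x₂⟫ - α ⟪x₁, e⟫ ⟪e, x₂⟫| ≤ max(1, |α - 1|) ‖x₁‖ ‖x₂‖`.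
Multiplying by `∏_{i ≥ 3} ⟪xᵢ, e⟫` and using the triangle inequality,
`|α| |∏ ⟪xᵢ, e⟫| ≤ max(1, |α - 1|) ∏ ‖xᵢ‖ + W` with `W = |⟪x₁, x₂⟫ ∏_{i ≥ 3} ⟪xᵢ, e⟫| ≤ ∏ ‖xᵢ‖`;
squaring and spending the slack `ζ W (∏ ‖xᵢ‖ - W) ≥ 0` yields the inequality.
-/

open scoped ComplexOrder InnerProductSpace
open Finset

theorem Finset.prod_Icc_one_eq_mul_mul_prod_Icc_three {M : Type*} [CommMonoid M] {n : ℕ}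
    (hn : 2 ≤ n) (f : ℕ → M) :
    ∏ i ∈ Icc 1 n, f i = f 1 * (f 2 * ∏ i ∈ Icc 3 n, f i) := by
  rw [← insert_Icc_add_one_left_eq_Icc (by omega : 1 ≤ n), prod_insert (by simp),
    ← insert_Icc_add_one_left_eq_Icc (show 1 + 1 ≤ n from hn), prod_insert (by simp)]
  rfl

theorem sq_le_of_mul_le_add_of_le {a p m S W ζ : ℝ} (ha : 0 < a) (hp : 0 ≤ p) (hζ : 0 ≤ ζ)
    (hW : 0 ≤ W) (hWS : W ≤ S) (h : a * p ≤ m * S + W) :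
    p ^ 2 ≤ m ^ 2 / a ^ 2 * S ^ 2 + 1 / (a ^ 2 * (1 + ζ)) * W ^ 2
      + (ζ + 2 * (1 + ζ) * m) / (a ^ 2 * (1 + ζ)) * S * W := by
  have hsq : (a * p) ^ 2 ≤ (m * S + W) ^ 2 := pow_le_pow_left₀ (by positivity) h 2
  have hslack : 0 ≤ ζ * W * (S - W) := by have := sub_nonneg.2 hWS; positivity
  have key : p ^ 2 * (a ^ 2 * (1 + ζ)) ≤
      (1 + ζ) * m ^ 2 * S ^ 2 + W ^ 2 + (ζ + 2 * (1 + ζ) * m) * S * W := by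
    nlinarith
  have hrhs : m ^ 2 / a ^ 2 * S ^ 2 + 1 / (a ^ 2 * (1 + ζ)) * W ^ 2
      + (ζ + 2 * (1 + ζ) * m) / (a ^ 2 * (1 + ζ)) * S * W
      = ((1 + ζ) * m ^ 2 * S ^ 2 + W ^ 2 + (ζ + 2 * (1 + ζ) * m) * S * W) / (a ^ 2 * (1 + ζ)) := by
    field_simp
  rw [hrhs, le_div_iff₀ (by positivity)]
  exact key

section Buzano

variable {𝕜 E : Type*} [RCLike 𝕜] [SeminormedAddCommGroup E] [InnerProductSpace 𝕜 E]

theorem RCLike.norm_sub_one_sq (α : 𝕜) : ‖α - 1‖ ^ 2 = ‖α‖ ^ 2 - 2 * RCLike.re α + 1 := by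
  simp only [RCLike.norm_sq_eq_def, map_sub, RCLike.one_re, RCLike.one_im]
  ring

theorem norm_sub_smul_inner_sq {e : E} (he : ‖e‖ = 1) (α : 𝕜) (b : E) :
    ‖b - (α * ⟪e, b⟫_𝕜) • e‖ ^ 2 = ‖b‖ ^ 2 + (‖α - 1‖ ^ 2 - 1) * ‖⟪e, b⟫_𝕜‖ ^ 2 := by
  rw [norm_sub_sq (𝕜 := 𝕜), inner_smul_right, norm_smul, he, mul_one, norm_mul,
    ← inner_conj_symm e b, mul_assoc, RCLike.conj_mul, ← RCLike.ofReal_pow, RCLike.re_mul_ofReal,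
    RCLike.norm_sub_one_sq, RCLike.norm_conj]
  ring

theorem norm_sub_smul_inner_le {e : E} (he : ‖e‖ = 1) (α : 𝕜) (b : E) :
    ‖b - (α * ⟪e, b⟫_𝕜) • e‖ ≤ max 1 ‖α - 1‖ * ‖b‖ := by
  have hproj : ‖⟪e, b⟫_𝕜‖ ^ 2 ≤ ‖b‖ ^ 2 := by
    have := norm_inner_le_norm (𝕜 := 𝕜) e b
    rw [he, one_mul] at this
    exact pow_le_pow_left₀ (norm_nonneg _) this 2
  refine le_of_sq_le_sq ?_ (by positivity)
  rw [norm_sub_smul_inner_sq he, mul_pow]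
  rcases le_total ‖α - 1‖ 1 with h | h
  · have hc : ‖α - 1‖ ^ 2 ≤ 1 := pow_le_one₀ (norm_nonneg _) h
    have := mul_nonpos_of_nonpos_of_nonneg (sub_nonpos.2 hc) (sq_nonneg ‖⟪e, b⟫_𝕜‖)
    rw [max_eq_left h]
    linarith
  · have hc : 1 ≤ ‖α - 1‖ ^ 2 := one_le_pow₀ h
    have := mul_le_mul_of_nonneg_left hproj (sub_nonneg.2 hc)
    rw [max_eq_right h]
    linarith

/-- A Buzano-type inequality: for `α = 2` it is Buzano's inequality. -/
theorem norm_inner_sub_mul_inner_mul_inner_le {e : E} (he : ‖e‖ = 1) (α : 𝕜) (a b : E) :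
    ‖⟪a, b⟫_𝕜 - α * ⟪a, e⟫_𝕜 * ⟪e, b⟫_𝕜‖ ≤ max 1 ‖α - 1‖ * (‖a‖ * ‖b‖) := by
  have hinner : ⟪a, b⟫_𝕜 - α * ⟪a, e⟫_𝕜 * ⟪e, b⟫_𝕜 = ⟪a, b - (α * ⟪e, b⟫_𝕜) • e⟫_𝕜 := by
    rw [inner_sub_right, inner_smul_right]
    ring
  calc ‖⟪a, b⟫_𝕜 - α * ⟪a, e⟫_𝕜 * ⟪e, b⟫_𝕜‖ ≤ ‖a‖ * ‖b - (α * ⟪e, b⟫_𝕜) • e‖ :=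
        hinner ▸ norm_inner_le_norm a _
    _ ≤ ‖a‖ * (max 1 ‖α - 1‖ * ‖b‖) := by gcongr; exact norm_sub_smul_inner_le he α b
    _ = max 1 ‖α - 1‖ * (‖a‖ * ‖b‖) := by ring

end Buzano

section ProductInequality

variable {𝕜 E : Type*} [RCLike 𝕜] [SeminormedAddCommGroup E] [InnerProductSpace 𝕜 E]
  {e : E} {n : ℕ} (x : ℕ → E)

theorem norm_inner_mul_prod_inner_le_prod_norm (he : ‖e‖ = 1) (hn : 2 ≤ n) :
    ‖⟪x 1, x 2⟫_𝕜 * ∏ i ∈ Icc 3 n, ⟪x i, e⟫_𝕜‖ ≤ ∏ i ∈ Icc 1 n, ‖x i‖ := by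
  rw [prod_Icc_one_eq_mul_mul_prod_Icc_three hn, norm_mul, norm_prod, ← mul_assoc]
  gcongr with i
  · exact norm_inner_le_norm _ _
  · simpa [he] using norm_inner_le_norm (𝕜 := 𝕜) (x i) e

theorem norm_mul_norm_prod_inner_le (he : ‖e‖ = 1) (hn : 2 ≤ n) (α : 𝕜) :
    ‖α‖ * ‖∏ i ∈ Icc 1 n, ⟪x i, e⟫_𝕜‖ ≤
      max 1 ‖α - 1‖ * ∏ i ∈ Icc 1 n, ‖x i‖ + ‖⟪x 1, x 2⟫_𝕜 * ∏ i ∈ Icc 3 n, ⟪x i, e⟫_𝕜‖ := by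
  set Q := ∏ i ∈ Icc 3 n, ⟪x i, e⟫_𝕜
  have hQ : ‖Q‖ ≤ ∏ i ∈ Icc 3 n, ‖x i‖ := by
    rw [norm_prod]
    gcongr with i
    simpa [he] using norm_inner_le_norm (𝕜 := 𝕜) (x i) e
  have hbuz := norm_inner_sub_mul_inner_mul_inner_le he α (x 1) (x 2)
  have htri := norm_sub_norm_le (α * ⟪x 1, e⟫_𝕜 * ⟪e, x 2⟫_𝕜) ⟪x 1, x 2⟫_𝕜
  rw [norm_sub_rev] at htri
  calc ‖α‖ * ‖∏ i ∈ Icc 1 n, ⟪x i, e⟫_𝕜‖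
      = ‖α * ⟪x 1, e⟫_𝕜 * ⟪e, x 2⟫_𝕜‖ * ‖Q‖ := by
        rw [prod_Icc_one_eq_mul_mul_prod_Icc_three hn]
        simp only [norm_mul, norm_inner_symm e (x 2)]
        ring
    _ ≤ (max 1 ‖α - 1‖ * (‖x 1‖ * ‖x 2‖) + ‖⟪x 1, x 2⟫_𝕜‖) * ‖Q‖ := by
        gcongr
        linarith
    _ ≤ max 1 ‖α - 1‖ * (‖x 1‖ * ‖x 2‖ * ∏ i ∈ Icc 3 n, ‖x i‖) + ‖⟪x 1, x 2⟫_𝕜 * Q‖ := by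
        rw [add_mul, norm_mul, mul_assoc]
        gcongr
    _ = max 1 ‖α - 1‖ * ∏ i ∈ Icc 1 n, ‖x i‖ + ‖⟪x 1, x 2⟫_𝕜 * Q‖ := by
        rw [prod_Icc_one_eq_mul_mul_prod_Icc_three hn, mul_assoc (‖x 1‖)]

theorem norm_prod_inner_sq_le (he : ‖e‖ = 1) (hn : 2 ≤ n) {α : 𝕜} (hα : α ≠ 0) {ζ : ℝ}
    (hζ : 0 ≤ ζ) :
    ‖∏ i ∈ Icc 1 n, ⟪x i, e⟫_𝕜‖ ^ 2 ≤
      max 1 (‖α - 1‖ ^ 2) / ‖α‖ ^ 2 * ∏ i ∈ Icc 1 n, ‖x i‖ ^ 2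
      + 1 / (‖α‖ ^ 2 * (1 + ζ)) * ‖⟪x 1, x 2⟫_𝕜 * ∏ i ∈ Icc 3 n, ⟪x i, e⟫_𝕜‖ ^ 2
      + (ζ + 2 * (1 + ζ) * max 1 ‖α - 1‖) / (‖α‖ ^ 2 * (1 + ζ)) * (∏ i ∈ Icc 1 n, ‖x i‖) *
          ‖⟪x 1, x 2⟫_𝕜 * ∏ i ∈ Icc 3 n, ⟪x i, e⟫_𝕜‖ := by
  have hmax : max 1 (‖α - 1‖ ^ 2) = max 1 ‖α - 1‖ ^ 2 := by
    rcases le_total ‖α - 1‖ 1 with h | h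
    · rw [max_eq_left h, max_eq_left (pow_le_one₀ (norm_nonneg _) h), one_pow]
    · rw [max_eq_right h, max_eq_right (one_le_pow₀ h)]
  rw [hmax, prod_pow]
  exact sq_le_of_mul_le_add_of_le (norm_pos_iff.2 hα) (norm_nonneg _) hζ (norm_nonneg _)
    (norm_inner_mul_prod_inner_le_prod_norm x he hn) (norm_mul_norm_prod_inner_le x he hn α)

end ProductInequality

namespace PositiveLinearMap

variable {A : Type*} [NonUnitalCStarAlgebra A] [PartialOrder A]

/-- `X` with the semi-inner product `f ⟪x, y⟫_A`; for `X = A` this is `f.PreGNS`. -/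
def PreGNSModule (_f : A →ₚ[ℂ] ℂ) (X : Type*) := X

variable [StarOrderedRing A] (f : A →ₚ[ℂ] ℂ)
  (X : Type*) [AddCommGroup X] [Module ℂ X] [SMul A X] [Norm X] [CStarModule A X]

instance : AddCommGroup (f.PreGNSModule X) := inferInstanceAs (AddCommGroup X)
instance : Module ℂ (f.PreGNSModule X) := inferInstanceAs (Module ℂ X)

def toPreGNSModule : X ≃ₗ[ℂ] f.PreGNSModule X := LinearEquiv.refl ℂ _

noncomputable abbrev preGNSModuleCore : PreInnerProductSpace.Core ℂ (f.PreGNSModule X) where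
  inner x y := f (inner A ((f.toPreGNSModule X).symm x) ((f.toPreGNSModule X).symm y))
  conj_inner_symm x y := by simp [← Complex.star_def, ← map_star f]
  re_inner_nonneg x := (RCLike.nonneg_iff.mp (f.map_nonneg CStarModule.inner_self_nonneg)).1
  add_left x y z := by simp [CStarModule.inner_add_left]
  smul_left x y r := by simp [CStarModule.inner_smul_left_complex]

noncomputable instance : SeminormedAddCommGroup (f.PreGNSModule X) :=
  InnerProductSpace.Core.toSeminormedAddCommGroup (c := f.preGNSModuleCore X)

noncomputable instance : InnerProductSpace ℂ (f.PreGNSModule X) :=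
  InnerProductSpace.ofCore (f.preGNSModuleCore X)

variable {X}

lemma inner_toPreGNSModule (x y : X) :
    ⟪f.toPreGNSModule X x, f.toPreGNSModule X y⟫_ℂ = f (inner A x y) := rfl

lemma norm_toPreGNSModule (x : X) :
    ‖f.toPreGNSModule X x‖ = √(f (inner A x x)).re := rfl

lemma norm_toPreGNSModule_sq (x : X) :
    ‖f.toPreGNSModule X x‖ ^ 2 = (f (inner A x x)).re :=
  Real.sq_sqrt (RCLike.nonneg_iff.mp (f.map_nonneg CStarModule.inner_self_nonneg)).1

end PositiveLinearMap

/-- Corollary 2.4: Buzano-type inequality in pre-Hilbert `C*`-modules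
with parameter `ζ ≥ 0`. -/
theorem buzano_corollary_zeta
    {A X : Type*} [NonUnitalCStarAlgebra A] [PartialOrder A] [StarOrderedRing A]
    [AddCommGroup X] [Module ℂ X] [SMul A X] [Norm X] [CStarModule A X]
    (φ : A →ₗ[ℂ] ℂ) (hφ : ∀ b : A, 0 ≤ b → 0 ≤ φ b)
    (n : ℕ) (hn : 2 ≤ n) (x : ℕ → X) (z : X)
    (hz : φ (inner A z z : A) = 1)
    (ζ : ℝ) (hζ : 0 ≤ ζ) (α : ℂ) (hα : α ≠ 0) :
    ‖∏ i ∈ Finset.Icc 1 n, φ (inner A (x i) z : A)‖ ^ 2 ≤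
      max 1 (‖α - 1‖ ^ 2) / ‖α‖ ^ 2 *
          ∏ i ∈ Finset.Icc 1 n, (φ (inner A (x i) (x i) : A)).re
      + 1 / (‖α‖ ^ 2 * (1 + ζ)) *
          ‖φ (inner A (x 1) (x 2) : A) *
            ∏ i ∈ Finset.Icc 3 n, φ (inner A (x i) z : A)‖ ^ 2
      + (ζ + 2 * (1 + ζ) * max 1 ‖α - 1‖) / (‖α‖ ^ 2 * (1 + ζ)) *
          (∏ i ∈ Finset.Icc 1 n, Real.sqrt (φ (inner A (x i) (x i) : A)).re) *
          ‖φ (inner A (x 1) (x 2) : A) *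
            ∏ i ∈ Finset.Icc 3 n, φ (inner A (x i) z : A)‖ := by
  let f : A →ₚ[ℂ] ℂ := .mk₀ φ hφ
  have he : ‖f.toPreGNSModule X z‖ = 1 := by
    rw [f.norm_toPreGNSModule, show f (inner A z z) = 1 from hz]
    simp
  have h := norm_prod_inner_sq_le (fun i ↦ f.toPreGNSModule X (x i)) he hn hα hζ
  simp only [f.norm_toPreGNSModule_sq] at h
  simp only [f.inner_toPreGNSModule, f.norm_toPreGNSModule] at h
  exact h
end

section
/- Let A be a unital C*-algebra and a ∈ A. Then for all nonzero complex numbers α and β: v(a)³ ≤ (max{1,|α−1|}/(2|α|))·‖a*a + aa*‖·‖a‖ + (max{1,|β−1|}/|αβ|)·‖a²‖·‖a‖ + (1/|αβ|)·v(a³). -/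
/-! For a state `f` and `λ = f a`, expanding gives
`αβλ³ = f (a³) - f ((a - βλ) a²) - βλ · f ((a - αλ) a)`.
Each middle term is a GNS inner product `⟪(a - γλ)⋆, b⟫`, and `(a - γλ)⋆ = a⋆ - γ̄ ⟪1, a⋆⟫ 1`
changes `a⋆` only along the unit vector `1` (by the factor `1 - γ̄`), so by Pythagoras
`‖(a - γλ)⋆‖ ≤ max 1 |γ - 1| · ‖a⋆‖`. Cauchy–Schwarz, the bound `‖x‖_f ≤ ‖x‖` and, for the
`α`-term, AM–GM `‖a⋆‖_f ‖a‖_f ≤ f (a⋆a + aa⋆) / 2` bound the three terms; then take suprema over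
states. -/

open scoped ComplexOrder

/-- A state on a unital `C*`-algebra: a positive linear functional `φ` (equivalently, since the
algebra is complete, `φ (star b * b) ≥ 0` for all `b`) with `φ 1 = 1`. -/
def IsState {A : Type*} [CStarAlgebra A] (φ : A →ₗ[ℂ] ℂ) : Prop :=
  (∀ b : A, 0 ≤ φ (star b * b)) ∧ φ 1 = 1

/-- The numerical radius of an element of a unital `C*`-algebra:
`v(a) = sup { |φ(a)| : φ a state on A }`. -/
noncomputable def numRadius {A : Type*} [CStarAlgebra A] (a : A) : ℝ :=
  sSup {r : ℝ | ∃ φ : A →ₗ[ℂ] ℂ, IsState φ ∧ r = ‖φ a‖}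

open scoped InnerProductSpace

lemma norm_sub_smul_inner_smul_le {𝕜 E : Type*} [RCLike 𝕜] [SeminormedAddCommGroup E]
    [InnerProductSpace 𝕜 E] {e : E} (he : ‖e‖ = 1) (u : E) (c : 𝕜) :
    ‖u - (c * ⟪e, u⟫_𝕜) • e‖ ≤ max 1 ‖1 - c‖ * ‖u‖ := by
  set p := ⟪e, u⟫_𝕜 • e
  set w := u - p
  have horth : ⟪w, p⟫_𝕜 = 0 := by
    simp [w, p, inner_sub_left, inner_smul_right, inner_smul_left, he]
  have hu : ‖u‖ * ‖u‖ = ‖w‖ * ‖w‖ + ‖p‖ * ‖p‖ := by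
    rw [← norm_add_sq_eq_norm_sq_add_norm_sq_of_inner_eq_zero _ _ horth, sub_add_cancel]
  have hv : ‖u - (c * ⟪e, u⟫_𝕜) • e‖ * ‖u - (c * ⟪e, u⟫_𝕜) • e‖
      = ‖w‖ * ‖w‖ + ‖1 - c‖ * ‖1 - c‖ * (‖p‖ * ‖p‖) := by
    have hsplit : u - (c * ⟪e, u⟫_𝕜) • e = w + (1 - c) • p := by
      simp only [w, p, smul_smul, sub_mul, one_mul, sub_smul]; abel
    rw [hsplit, norm_add_sq_eq_norm_sq_add_norm_sq_of_inner_eq_zero _ _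
      (by rw [inner_smul_right, horth, mul_zero]), norm_smul]
    ring
  have hmc : ‖1 - c‖ ≤ max 1 ‖1 - c‖ := le_max_right _ _
  have hm1 : 1 ≤ max 1 ‖1 - c‖ := le_max_left _ _
  have hm2 : 1 ≤ max 1 ‖1 - c‖ * max 1 ‖1 - c‖ := one_le_mul_of_one_le_of_one_le hm1 hm1
  rw [mul_self_le_mul_self_iff (norm_nonneg _) (by positivity), hv]
  nlinarith [mul_le_mul_of_nonneg_right (mul_self_le_mul_self (norm_nonneg _) hmc)
    (mul_self_nonneg ‖p‖), mul_le_mul_of_nonneg_right hm2 (mul_self_nonneg ‖w‖)]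

lemma Real.sSup_pow_le {S : Set ℝ} {n : ℕ} (hn : n ≠ 0) {R : ℝ} (hR : 0 ≤ R)
    (hS : ∀ r ∈ S, 0 ≤ r ∧ r ^ n ≤ R) : sSup S ^ n ≤ R := by
  have hsup : sSup S ≤ R ^ (n⁻¹ : ℝ) := by
    refine Real.sSup_le (fun r hr ↦ ?_) (by positivity)
    rw [← pow_le_pow_iff_left₀ (hS r hr).1 (by positivity) hn, Real.rpow_inv_natCast_pow hR hn]
    exact (hS r hr).2
  calc sSup S ^ n ≤ (R ^ (n⁻¹ : ℝ)) ^ n :=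
        pow_le_pow_left₀ (Real.sSup_nonneg fun r hr ↦ (hS r hr).1) hsup n
    _ = R := Real.rpow_inv_natCast_pow hR hn

namespace PositiveLinearMap

variable {A : Type*} [CStarAlgebra A] [PartialOrder A] [StarOrderedRing A] (f : A →ₚ[ℂ] ℂ)

lemma sq_norm_toPreGNS (x : A) : ‖f.toPreGNS x‖ ^ 2 = ‖f (star x * x)‖ := by
  rw [← ofPreGNS_toPreGNS f x, ← preGNS_norm_sq, ofPreGNS_toPreGNS, ← Complex.ofReal_pow,
    Complex.norm_of_nonneg (by positivity)]

lemma norm_apply_star_mul_le (x y : A) :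
    ‖f (star x * y)‖ ≤ ‖f.toPreGNS x‖ * ‖f.toPreGNS y‖ :=
  norm_inner_le_norm (𝕜 := ℂ) (f.toPreGNS x) (f.toPreGNS y)

lemma norm_toPreGNS_le (hf : f 1 = 1) (x : A) : ‖f.toPreGNS x‖ ≤ ‖x‖ := by
  rw [← sq_le_sq₀ (norm_nonneg _) (norm_nonneg _), sq_norm_toPreGNS, sq,
    ← CStarRing.norm_star_mul_self]
  simpa [hf] using f.norm_apply_le_of_nonneg _ (star_mul_self_nonneg x)

lemma norm_toPreGNS_one (hf : f 1 = 1) : ‖f.toPreGNS 1‖ = 1 := by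
  rw [← pow_eq_one_iff_of_nonneg (norm_nonneg _) two_ne_zero, sq_norm_toPreGNS]
  simp [hf]

lemma norm_apply_le (hf : f 1 = 1) (a : A) : ‖f a‖ ≤ ‖a‖ := by
  simpa [f.norm_toPreGNS_one hf] using
    (f.norm_apply_star_mul_le 1 a).trans (mul_le_mul_of_nonneg_left (f.norm_toPreGNS_le hf a)
      (norm_nonneg _))

lemma sq_norm_toPreGNS_add_sq_norm_toPreGNS_star_le (hf : f 1 = 1) (a : A) :
    ‖f.toPreGNS a‖ ^ 2 + ‖f.toPreGNS (star a)‖ ^ 2 ≤ ‖star a * a + a * star a‖ := by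
  have hsum : ((‖f.toPreGNS a‖ ^ 2 + ‖f.toPreGNS (star a)‖ ^ 2 : ℝ) : ℂ)
      = f (star a * a + a * star a) := by
    push_cast
    rw [preGNS_norm_sq, preGNS_norm_sq, map_add]
    simp
  have := f.norm_apply_le hf (star a * a + a * star a)
  rwa [← hsum, Complex.norm_of_nonneg (by positivity)] at this

lemma norm_apply_sub_smul_one_mul_le (hf : f 1 = 1) (a b : A) (γ : ℂ) :
    ‖f ((a - (γ * f a) • 1) * b)‖ ≤ max 1 ‖γ - 1‖ * ‖f.toPreGNS (star a)‖ * ‖f.toPreGNS b‖ := by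
  set c := starRingEnd ℂ γ
  have hinner : ⟪f.toPreGNS 1, f.toPreGNS (star a)⟫_ℂ = f (star a) := by
    rw [preGNS_inner_def]; simp
  have hstar : a - (γ * f a) • 1 = star (star a - (c * f (star a)) • 1) := by
    simp [c, map_star]
  calc ‖f ((a - (γ * f a) • 1) * b)‖
      ≤ ‖f.toPreGNS (star a - (c * f (star a)) • 1)‖ * ‖f.toPreGNS b‖ := by
        rw [hstar]; exact f.norm_apply_star_mul_le _ _
    _ ≤ max 1 ‖1 - c‖ * ‖f.toPreGNS (star a)‖ * ‖f.toPreGNS b‖ := by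
        gcongr
        rw [map_sub, map_smul, ← hinner]
        exact norm_sub_smul_inner_smul_le (f.norm_toPreGNS_one hf) _ c
    _ = max 1 ‖γ - 1‖ * ‖f.toPreGNS (star a)‖ * ‖f.toPreGNS b‖ := by
        rw [← Complex.norm_conj, map_sub, map_one, Complex.conj_conj, norm_sub_rev]

lemma norm_apply_pow_three_le (hf : f 1 = 1) (a : A) {α β : ℂ} (hα : α ≠ 0) (hβ : β ≠ 0) :
    ‖f a‖ ^ 3 ≤
      max 1 (‖α - 1‖) / (2 * ‖α‖) * ‖star a * a + a * star a‖ * ‖a‖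
        + max 1 (‖β - 1‖) / ‖α * β‖ * ‖a ^ 2‖ * ‖a‖
        + (1 / ‖α * β‖) * ‖f (a ^ 3)‖ := by
  set l := f a
  set mα := max 1 ‖α - 1‖
  set mβ := max 1 ‖β - 1‖
  set N := ‖star a * a + a * star a‖
  set T₂ := f ((a - (β * l) • 1) * a ^ 2)
  set T₃ := f ((a - (α * l) • 1) * a)
  have hid : α * β * l ^ 3 = f (a ^ 3) - T₂ - β * l * T₃ := by
    simp only [T₂, T₃, sub_mul, smul_mul_assoc, one_mul, map_sub, map_smul, smul_eq_mul,
      ← pow_succ', ← sq]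
    ring
  have hT₂ : ‖T₂‖ ≤ mβ * ‖a ^ 2‖ * ‖a‖ := by
    refine (f.norm_apply_sub_smul_one_mul_le hf a (a ^ 2) β).trans ?_
    rw [mul_right_comm]
    gcongr
    · exact f.norm_toPreGNS_le hf _
    · simpa using f.norm_toPreGNS_le hf (star a)
  have hT₃ : ‖T₃‖ ≤ mα * (N / 2) := by
    refine (f.norm_apply_sub_smul_one_mul_le hf a a α).trans ?_
    rw [mul_assoc]
    gcongr
    nlinarith [two_mul_le_add_sq ‖f.toPreGNS (star a)‖ ‖f.toPreGNS a‖,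
      f.sq_norm_toPreGNS_add_sq_norm_toPreGNS_star_le hf a]
  have hl : ‖l‖ ≤ ‖a‖ := f.norm_apply_le hf a
  have hα₀ : 0 < ‖α‖ := norm_pos_iff.mpr hα
  have hβ₀ : 0 < ‖β‖ := norm_pos_iff.mpr hβ
  calc ‖l‖ ^ 3 = ‖α * β * l ^ 3‖ / (‖α‖ * ‖β‖) := by
        rw [norm_mul, norm_mul, norm_pow]; field_simp
    _ ≤ (‖f (a ^ 3)‖ + ‖T₂‖ + ‖β‖ * ‖l‖ * ‖T₃‖) / (‖α‖ * ‖β‖) := by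
        rw [hid]; gcongr; grw [norm_sub_le, norm_sub_le, norm_mul, norm_mul]
    _ ≤ (‖f (a ^ 3)‖ + mβ * ‖a ^ 2‖ * ‖a‖ + ‖β‖ * ‖a‖ * (mα * (N / 2))) / (‖α‖ * ‖β‖) := by
        gcongr
    _ = _ := by rw [norm_mul]; field_simp; ring

end PositiveLinearMap

section

variable {A : Type*} [CStarAlgebra A] {φ : A →ₗ[ℂ] ℂ}

lemma IsState.map_nonneg [PartialOrder A] [StarOrderedRing A] (hφ : IsState φ) {x : A}
    (hx : 0 ≤ x) : 0 ≤ φ x := by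
  obtain ⟨s, rfl⟩ := CStarAlgebra.nonneg_iff_eq_star_mul_self.mp hx
  exact hφ.1 s

noncomputable def IsState.toPositiveLinearMap [PartialOrder A] [StarOrderedRing A]
    (hφ : IsState φ) : A →ₚ[ℂ] ℂ :=
  .mk₀ φ fun _ ↦ hφ.map_nonneg

lemma numRadius_nonneg (a : A) : 0 ≤ numRadius a :=
  Real.sSup_nonneg <| by rintro _ ⟨φ, -, rfl⟩; exact norm_nonneg _

lemma IsState.norm_apply_le_numRadius (hφ : IsState φ) (a : A) : ‖φ a‖ ≤ numRadius a := by
  let := CStarAlgebra.spectralOrder A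
  let := CStarAlgebra.spectralOrderedRing A
  refine le_csSup ⟨‖a‖, ?_⟩ ⟨φ, hφ, rfl⟩
  rintro _ ⟨ψ, hψ, rfl⟩
  exact hψ.toPositiveLinearMap.norm_apply_le hψ.2 a

end

/-- Theorem 2.10: for all nonzero `α, β ∈ ℂ`,
`v(a)³ ≤ (max{1,|α−1|}/(2|α|))·‖a*a + aa*‖·‖a‖ + (max{1,|β−1|}/|αβ|)·‖a²‖·‖a‖ + (1/|αβ|)·v(a³)`. -/
theorem numRadius_cube_le
    {A : Type*} [CStarAlgebra A] (a : A) (α β : ℂ) (hα : α ≠ 0) (hβ : β ≠ 0) :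
    numRadius a ^ 3 ≤
      max 1 (‖α - 1‖) / (2 * ‖α‖) * ‖star a * a + a * star a‖ * ‖a‖
        + max 1 (‖β - 1‖) / ‖α * β‖ * ‖a ^ 2‖ * ‖a‖
        + (1 / ‖α * β‖) * numRadius (a ^ 3) := by
  let := CStarAlgebra.spectralOrder A
  let := CStarAlgebra.spectralOrderedRing A
  have := numRadius_nonneg (a ^ 3)
  refine Real.sSup_pow_le three_ne_zero (by positivity) ?_
  rintro _ ⟨φ, hφ, rfl⟩
  refine ⟨norm_nonneg _, ?_⟩
  refine (hφ.toPositiveLinearMap.norm_apply_pow_three_le hφ.2 a hα hβ).trans ?_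
  gcongr
  exact hφ.norm_apply_le_numRadius _
end
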